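/- arXiv:2001.00518 — 2 statements merged into one kernel-verified Lean document; each statement's English description precedes it below -/
import Mathlib

section
/- Let (Y, τ) be a topological space, (Z, 𝒰) a uniform space, and 𝔗 a topology on EC(Y,Z). Then 𝔗 is admissible if and only if for every net {f_n}_{n∈Δ} in EC(Y,Z) and every f ∈ EC(Y,Z), convergence of {f_n}_{n∈Δ} to f in the topology 𝔗 implies equi-continuous convergence of {f_n}_{n∈Δ} to f. -/
universe u

/-- A function from a topological space to a uniform space is *equi-continuous*
if for each point `w` and each entourage `U` there is an open neighbourhood `V` of
`w` with `h(V) ⊆ U[h(w)]`. -/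
def EquiContinuous {W : Type*} {Z : Type*} [TopologicalSpace W] [UniformSpace Z]
    (h : W → Z) : Prop :=
  ∀ w : W, ∀ U ∈ uniformity Z, ∃ V : Set W, IsOpen V ∧ w ∈ V ∧ ∀ v ∈ V, (h w, h v) ∈ U

/-- `EC Y Z` is the set of all equi-continuous functions from `Y` to `Z`. -/
def EC (Y Z : Type u) [TopologicalSpace Y] [UniformSpace Z] : Set (Y → Z) :=
  {f | EquiContinuous f}

/-- A topology `T` on `EC(Y,Z)` is *admissible* if the evaluation map
`e : EC(Y,Z) × Y → Z`, `e(f,y) = f(y)`, is equi-continuous (with the product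
topology of `T` and the topology of `Y`). -/
def Admissible {Y Z : Type u} [TopologicalSpace Y] [UniformSpace Z]
    (T : TopologicalSpace ↥(EC Y Z)) : Prop :=
  letI := T
  EquiContinuous (fun p : ↥(EC Y Z) × Y => p.1.1 p.2)

/-- A topology `T` on `EC(Y,Z)` is *splitting* if for every topological space `X`,
equi-continuity of a map `g : X × Y → Z` implies continuity of the associated map
`g* : X → EC(Y,Z)`, `g*(x)(y) = g(x,y)`. -/
def Splitting {Y Z : Type u} [TopologicalSpace Y] [UniformSpace Z]
    (T : TopologicalSpace ↥(EC Y Z)) : Prop :=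
  ∀ (X : Type u) [TopologicalSpace X] (g' : X → ↥(EC Y Z)),
    EquiContinuous (fun p : X × Y => (g' p.1).1 p.2) →
    letI := T
    Continuous g'

/-- A net `F : Δ → EC(Y,Z)` *equi-continuously converges* to `f ∈ EC(Y,Z)` if
for every net `{y_m}_{m ∈ σ}` in `Y` converging to a point `y`, the net
`{F_n(y_m)}` indexed by the product directed set `Δ × σ` converges to `f(y)` in
`Z`, i.e., for each entourage `U`, eventually `(f(y), F_n(y_m)) ∈ U`. -/
def EquiConv {Y Z : Type u} [TopologicalSpace Y] [UniformSpace Z]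
    {Δ : Type u} [Preorder Δ] (F : Δ → ↥(EC Y Z)) (f : ↥(EC Y Z)) : Prop :=
  ∀ (σ : Type u) [Nonempty σ] [Preorder σ] [IsDirected σ (· ≤ ·)] (ys : σ → Y) (y : Y),
    (∀ V : Set Y, IsOpen V → y ∈ V → ∃ m₀, ∀ m, m₀ ≤ m → ys m ∈ V) →
    ∀ U ∈ uniformity Z, ∃ n₀ : Δ, ∃ m₀ : σ, ∀ n, n₀ ≤ n → ∀ m, m₀ ≤ m →
      (f.1 y, (F n).1 (ys m)) ∈ U

/-- A net `F : Δ → EC(Y,Z)` converges to `f` in the topology `T` on `EC(Y,Z)` if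
`F` is eventually in every `T`-open set containing `f`. -/
def NetConvIn {Y Z : Type u} [TopologicalSpace Y] [UniformSpace Z]
    (T : TopologicalSpace ↥(EC Y Z)) {Δ : Type u} [Preorder Δ]
    (F : Δ → ↥(EC Y Z)) (f : ↥(EC Y Z)) : Prop :=
  ∀ H : Set ↥(EC Y Z), (letI := T; IsOpen H) → f ∈ H → ∃ n₀, ∀ n, n₀ ≤ n → F n ∈ H

/-!
Equi-continuity in the sense used here is ordinary continuity, since the sets `U[z]` form a
neighbourhood base of `z`. Hence admissibility of `T` says that evaluation
`EC(Y,Z) × Y → Z` is continuous, while "convergence implies equi-continuous convergence" says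
that evaluation sends every product net `(f_n, y_m)` with `f_n → f` and `y_m → y` to a net
converging to `f(y)`. Product nets detect continuity at a point of a product: if `g` is not
continuous at `(a, b)`, pick in each neighbourhood `N` of `(a, b)` a point `q_N` whose image
avoids a fixed neighbourhood of `g (a, b)`; then `q_N → (a, b)`, and the product of the two
coordinate nets of `q`, restricted to the diagonal, is `q` itself.
-/

open Filter Topology Uniformity

instance Filter.isDirectedOrder_orderDual_sets {α : Type*} (l : Filter α) :
    IsDirectedOrder (↥l.sets)ᵒᵈ where
  directed s t := ⟨OrderDual.toDual ⟨s.1 ∩ t.1, inter_mem s.2 t.2⟩,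
    Set.inter_subset_left, Set.inter_subset_right⟩

instance Filter.nonempty_orderDual_sets {α : Type*} (l : Filter α) : Nonempty (↥l.sets)ᵒᵈ :=
  ⟨OrderDual.toDual ⟨Set.univ, univ_mem⟩⟩

theorem Filter.Frequently.exists_net_tendsto {α : Type*} {l : Filter α} {P : α → Prop}
    (h : ∃ᶠ x in l, P x) : ∃ q : (↥l.sets)ᵒᵈ → α, Tendsto q atTop l ∧ ∀ s, P (q s) := by
  have hq (s : (↥l.sets)ᵒᵈ) : ∃ x ∈ (OrderDual.ofDual s).1, P x :=
    (h.and_eventually (OrderDual.ofDual s).2).exists.imp fun _ hx => ⟨hx.2, hx.1⟩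
  choose q hq_mem hq_P using hq
  refine ⟨q, tendsto_atTop'.2 fun s hs => ⟨OrderDual.toDual ⟨s, hs⟩, fun t hst => ?_⟩, hq_P⟩
  exact hst (hq_mem t)

theorem Filter.eventually_atTop_prod_iff {α β : Type*} [Nonempty α] [Preorder α]
    [IsDirectedOrder α] [Nonempty β] [Preorder β] [IsDirectedOrder β] {p : α × β → Prop} :
    (∀ᶠ x in atTop, p x) ↔ ∃ a b, ∀ k, a ≤ k → ∀ l, b ≤ l → p (k, l) := by
  rw [← prod_atTop_atTop_eq, (atTop_basis.prod atTop_basis).eventually_iff]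
  simp only [Prod.exists, Prod.forall, Set.mem_prod, Set.mem_Ici, and_imp, true_and,
    imp_forall_iff]

theorem tendsto_atTop_nhds_iff_forall_isOpen {Δ X : Type*} [Nonempty Δ] [Preorder Δ]
    [IsDirectedOrder Δ] [TopologicalSpace X] {x : Δ → X} {a : X} :
    Tendsto x atTop (𝓝 a) ↔ ∀ V : Set X, IsOpen V → a ∈ V → ∃ n₀, ∀ n, n₀ ≤ n → x n ∈ V := by
  simp only [(nhds_basis_opens a).tendsto_right_iff, eventually_atTop, and_imp]
  exact forall_congr' fun _ => imp.swap

theorem continuousAt_iff_tendsto_prod_nets {A B : Type u} {Z : Type*} [TopologicalSpace A]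
    [TopologicalSpace B] [TopologicalSpace Z] {g : A × B → Z} {a : A} {b : B} :
    ContinuousAt g (a, b) ↔
      ∀ (Δ : Type u) [Nonempty Δ] [Preorder Δ] [IsDirectedOrder Δ] (xs : Δ → A),
        Tendsto xs atTop (𝓝 a) →
        ∀ (σ : Type u) [Nonempty σ] [Preorder σ] [IsDirectedOrder σ] (ys : σ → B),
          Tendsto ys atTop (𝓝 b) →
          Tendsto (fun p : Δ × σ => g (xs p.1, ys p.2)) atTop (𝓝 (g (a, b))) := by
  constructor
  · intro hg Δ _ _ _ xs hxs σ _ _ _ ys hys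
    rw [← prod_atTop_atTop_eq]
    exact hg.tendsto.comp (nhds_prod_eq (x := a) (y := b) ▸ hxs.prodMap hys)
  · intro h
    by_contra hg
    obtain ⟨s, hs, hfreq⟩ := not_tendsto_iff_exists_frequently_notMem.1 hg
    obtain ⟨q, hq, hq_notMem⟩ := hfreq.exists_net_tendsto
    have hgq := (h _ _ (continuous_fst.continuousAt.tendsto.comp hq)
      _ _ (continuous_snd.continuousAt.tendsto.comp hq)).comp tendsto_atTop_diagonal
    obtain ⟨n, hn⟩ := (hgq.eventually (eventually_mem_set.2 hs)).exists
    exact hq_notMem n hn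

theorem equiContinuous_iff_continuous {W Z : Type*} [TopologicalSpace W] [UniformSpace Z]
    {h : W → Z} : EquiContinuous h ↔ Continuous h := by
  simp only [continuous_iff_continuousAt, ContinuousAt, Uniform.tendsto_nhds_right]
  simp only [tendsto_iff_forall_eventually_mem, eventually_nhds_iff]
  exact forall₃_congr fun _ _ _ => exists_congr fun _ => and_rotate.symm

-- The variable `T` is a local instance, so it takes precedence over the subspace topology that
-- `EC Y Z` inherits from `Y → Z`.
theorem admissible_iff_continuous_eval {Y Z : Type u} [TopologicalSpace Y] [UniformSpace Z]
    (T : TopologicalSpace ↥(EC Y Z)) :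
    Admissible T ↔ Continuous (fun p : ↥(EC Y Z) × Y => p.1.1 p.2) :=
  equiContinuous_iff_continuous

theorem netConvIn_iff_tendsto {Y Z : Type u} [TopologicalSpace Y] [UniformSpace Z]
    (T : TopologicalSpace ↥(EC Y Z)) {Δ : Type u} [Nonempty Δ] [Preorder Δ] [IsDirectedOrder Δ]
    {F : Δ → ↥(EC Y Z)} {f : ↥(EC Y Z)} :
    NetConvIn T F f ↔ Tendsto F atTop (𝓝 f) :=
  tendsto_atTop_nhds_iff_forall_isOpen.symm

theorem equiConv_iff_tendsto {Y Z : Type u} [TopologicalSpace Y] [UniformSpace Z]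
    {Δ : Type u} [Nonempty Δ] [Preorder Δ] [IsDirectedOrder Δ]
    {F : Δ → ↥(EC Y Z)} {f : ↥(EC Y Z)} :
    EquiConv F f ↔
      ∀ (σ : Type u) [Nonempty σ] [Preorder σ] [IsDirectedOrder σ] (ys : σ → Y) (y : Y),
        Tendsto ys atTop (𝓝 y) →
        Tendsto (fun p : Δ × σ => (F p.1).1 (ys p.2)) atTop (𝓝 (f.1 y)) := by
  have tendsto_iff (σ : Type u) [Nonempty σ] [Preorder σ] [IsDirectedOrder σ] (ys : σ → Y)
      (y : Y) : Tendsto (fun p : Δ × σ => (F p.1).1 (ys p.2)) atTop (𝓝 (f.1 y)) ↔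
        ∀ U ∈ 𝓤 Z, ∃ n₀ m₀, ∀ n, n₀ ≤ n → ∀ m, m₀ ≤ m → (f.1 y, (F n).1 (ys m)) ∈ U := by
    rw [Uniform.tendsto_nhds_right, tendsto_iff_forall_eventually_mem]
    simp only [eventually_atTop_prod_iff]
  constructor
  · intro h σ _ _ _ ys y hys
    exact (tendsto_iff σ ys y).2 (h σ ys y (tendsto_atTop_nhds_iff_forall_isOpen.1 hys))
  · intro h σ _ _ _ ys y hys
    exact (tendsto_iff σ ys y).1 (h σ ys y (tendsto_atTop_nhds_iff_forall_isOpen.2 hys))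

/-- a topology `T` on `EC(Y,Z)` is admissible iff for every net
`{f_n}` in `EC(Y,Z)` and every `f ∈ EC(Y,Z)`, convergence of `{f_n}` to `f` in
`T` implies equi-continuous convergence of `{f_n}` to `f`. -/
theorem admissible_iff_conv_implies_equiConv {Y Z : Type u} [TopologicalSpace Y]
    [UniformSpace Z] (T : TopologicalSpace ↥(EC Y Z)) :
    Admissible T ↔
      ∀ (Δ : Type u) [Nonempty Δ] [Preorder Δ] [IsDirected Δ (· ≤ ·)]
        (F : Δ → ↥(EC Y Z)) (f : ↥(EC Y Z)),
        NetConvIn T F f → EquiConv F f := by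
  simp only [admissible_iff_continuous_eval, continuous_iff_continuousAt, Prod.forall,
    continuousAt_iff_tendsto_prod_nets]
  constructor
  · intro h Δ _ _ _ F f hF
    exact equiConv_iff_tendsto.2 fun σ _ _ _ ys y hys =>
      h f y Δ F ((netConvIn_iff_tendsto T).1 hF) σ ys hys
  · intro h f y Δ _ _ _ F hF σ _ _ _ ys hys
    exact equiConv_iff_tendsto.1 (h Δ F f ((netConvIn_iff_tendsto T).2 hF)) σ ys y hys
end

section
/- Let (Y, τ) be a topological space, (Z, 𝒰) a uniform space, and fix a selection U(f,y) of open witnesses of equi-continuity. A topology 𝕋 on 𝒪_Z(Y) is admissible if and only if its dual topology 𝔗(𝕋) on EC(Y,Z) (generated by the subbasis {(ℍ,U) : ℍ ∈ 𝕋, U ∈ 𝒰}) is admissible. -/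
universe u

section Dual

variable {Y Z : Type u} [TopologicalSpace Y] [UniformSpace Z]

/-- A *selection of open witnesses of equi-continuity* assigns to each entourage
`U`, each `f ∈ EC(Y,Z)` and each `y ∈ Y` an open set `U(f,y)` containing `y`
with `f(U(f,y)) ⊆ U[f(y)]`. -/
def IsSelection (sel : Set (Z × Z) → ↥(EC Y Z) → Y → Set Y) : Prop :=
  ∀ U ∈ uniformity Z, ∀ (f : ↥(EC Y Z)) (y : Y),
    IsOpen (sel U f y) ∧ y ∈ sel U f y ∧ ∀ v ∈ sel U f y, (f.1 y, f.1 v) ∈ U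

/-- `𝒪_Z(Y)`: the collection of all selected open sets `U(f,y)`. -/
def OZ (sel : Set (Z × Z) → ↥(EC Y Z) → Y → Set Y) : Set (Set Y) :=
  {V | ∃ U ∈ uniformity Z, ∃ (f : ↥(EC Y Z)) (y : Y), V = sel U f y}

/-- For `ℍ ⊆ 𝒪_Z(Y)` and an entourage `U`,
`(ℍ,U) = {f ∈ EC(Y,Z) | U(f,y) ∈ ℍ for every y ∈ Y}`. -/
def ECSet (sel : Set (Z × Z) → ↥(EC Y Z) → Y → Set Y)
    (ℍ : Set ↥(OZ sel)) (U : Set (Z × Z)) : Set ↥(EC Y Z) :=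
  {f | ∀ y : Y, sel U f y ∈ Subtype.val '' ℍ}

/-- For `ℋ ⊆ EC(Y,Z)` and an entourage `U`,
`(ℋ,U) = {U(f,y) | f ∈ ℋ, y ∈ Y}`, as a subset of `𝒪_Z(Y)`. -/
def OZSet (sel : Set (Z × Z) → ↥(EC Y Z) → Y → Set Y)
    (ℋ : Set ↥(EC Y Z)) (U : Set (Z × Z)) : Set ↥(OZ sel) :=
  {o | ∃ f ∈ ℋ, ∃ y : Y, o.1 = sel U f y}

/-- The dual topology `𝔗(𝕋)` on `EC(Y,Z)` of a topology `𝕋` on `𝒪_Z(Y)`: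
generated by the subbasis `{(ℍ,U) | ℍ ∈ 𝕋, U ∈ 𝒰}`. -/
def dualTopEC (sel : Set (Z × Z) → ↥(EC Y Z) → Y → Set Y)
    (TO : TopologicalSpace ↥(OZ sel)) : TopologicalSpace ↥(EC Y Z) :=
  TopologicalSpace.generateFrom
    {S | ∃ (ℍ : Set ↥(OZ sel)) (U : Set (Z × Z)),
      (letI := TO; IsOpen ℍ) ∧ U ∈ uniformity Z ∧ S = ECSet sel ℍ U}

/-- The dual topology `𝕋(𝔗)` on `𝒪_Z(Y)` of a topology `𝔗` on `EC(Y,Z)`: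
generated by the subbasis `{(ℋ,U) | ℋ ∈ 𝔗, U ∈ 𝒰}`. -/
def dualTopOZ (sel : Set (Z × Z) → ↥(EC Y Z) → Y → Set Y)
    (T : TopologicalSpace ↥(EC Y Z)) : TopologicalSpace ↥(OZ sel) :=
  TopologicalSpace.generateFrom
    {S | ∃ (ℋ : Set ↥(EC Y Z)) (U : Set (Z × Z)),
      (letI := T; IsOpen ℋ) ∧ U ∈ uniformity Z ∧ S = OZSet sel ℋ U}

/-- The multifunction `ḡ : X × 𝒰 → 𝒪_Z(Y)` associated with `g* : X → EC(Y,Z)`: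
`ḡ(x,U) = {U(g*(x),y) | y ∈ Y}`. -/
def gbar (sel : Set (Z × Z) → ↥(EC Y Z) → Y → Set Y) {X : Type u}
    (g' : X → ↥(EC Y Z)) (U : Set (Z × Z)) (x : X) : Set ↥(OZ sel) :=
  {o | ∃ y : Y, o.1 = sel U (g' x) y}

/-- `ḡ` is *upper semicontinuous with respect to the first variable* (for the
topology `TO` on `𝒪_Z(Y)`): for each fixed entourage `U`, the multifunction
`x ↦ ḡ(x,U)` is upper semicontinuous. -/
def USCFirst (sel : Set (Z × Z) → ↥(EC Y Z) → Y → Set Y)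
    (TO : TopologicalSpace ↥(OZ sel)) {X : Type u} [TopologicalSpace X]
    (g' : X → ↥(EC Y Z)) : Prop :=
  ∀ U ∈ uniformity Z, ∀ x : X, ∀ ℍ : Set ↥(OZ sel), (letI := TO; IsOpen ℍ) →
    gbar sel g' U x ⊆ ℍ →
    ∃ V : Set X, IsOpen V ∧ x ∈ V ∧ ∀ x' ∈ V, gbar sel g' U x' ⊆ ℍ

/-- A topology `TO` on `𝒪_Z(Y)` is *splitting* if for every topological space `X`,
equi-continuity of `g : X × Y → Z` implies upper semicontinuity with respect to the
first variable of `ḡ`. -/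
def SplittingO (sel : Set (Z × Z) → ↥(EC Y Z) → Y → Set Y)
    (TO : TopologicalSpace ↥(OZ sel)) : Prop :=
  ∀ (X : Type u) [TopologicalSpace X] (g' : X → ↥(EC Y Z)),
    EquiContinuous (fun p : X × Y => (g' p.1).1 p.2) → USCFirst sel TO g'

/-- A topology `TO` on `𝒪_Z(Y)` is *admissible* if for every topological space `X`
and every map `g* : X → EC(Y,Z)`, upper semicontinuity with respect to the first
variable of `ḡ` implies equi-continuity of `g`. -/
def AdmissibleO (sel : Set (Z × Z) → ↥(EC Y Z) → Y → Set Y)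
    (TO : TopologicalSpace ↥(OZ sel)) : Prop :=
  ∀ (X : Type u) [TopologicalSpace X] (g' : X → ↥(EC Y Z)),
    USCFirst sel TO g' → EquiContinuous (fun p : X × Y => (g' p.1).1 p.2)

end Dual

/-!
Since `ḡ(x,U) ⊆ ℍ` says exactly that `g*(x) ∈ (ℍ,U)`, upper semicontinuity of `ḡ` in the first
variable is the same as continuity of `g*` for the dual topology `𝔗(𝕋)`. On the other hand a
topology on `EC(Y,Z)` is admissible iff every continuous `g*` has an equi-continuous `g`: the
evaluation map is the case `g* = id`, and every other `g` factors through it.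
-/

open scoped Topology

theorem EquiContinuous.comp_continuous {V W Z : Type*} [TopologicalSpace V] [TopologicalSpace W]
    [UniformSpace Z] {h : W → Z} (hh : EquiContinuous h) {φ : V → W} (hφ : Continuous φ) :
    EquiContinuous (h ∘ φ) := by
  intro v U hU
  obtain ⟨O, hO, hφv, hOU⟩ := hh (φ v) U hU
  exact ⟨φ ⁻¹' O, hO.preimage hφ, hφv, fun v' hv' => hOU _ hv'⟩

theorem admissible_iff_forall_continuous {Y Z : Type u} [TopologicalSpace Y] [UniformSpace Z]
    (T : TopologicalSpace ↥(EC Y Z)) :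
    Admissible T ↔ ∀ (X : Type u) [TopologicalSpace X] (g' : X → ↥(EC Y Z)),
      Continuous[‹_›, T] g' → EquiContinuous (fun p : X × Y => (g' p.1).1 p.2) := by
  let := T
  constructor
  · intro hT X _ g' hg'
    exact hT.comp_continuous ((hg'.comp continuous_fst).prodMk continuous_snd)
  · intro h
    exact h _ id continuous_id

section Dual

variable {Y Z : Type u} [TopologicalSpace Y] [UniformSpace Z]
  (sel : Set (Z × Z) → ↥(EC Y Z) → Y → Set Y)

theorem gbar_subset_iff_mem_ECSet {X : Type u} (g' : X → ↥(EC Y Z)) {U : Set (Z × Z)}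
    (hU : U ∈ uniformity Z) (ℍ : Set ↥(OZ sel)) (x : X) :
    gbar sel g' U x ⊆ ℍ ↔ g' x ∈ ECSet sel ℍ U := by
  constructor
  · intro h y
    exact ⟨⟨sel U (g' x) y, U, hU, g' x, y, rfl⟩, h ⟨y, rfl⟩, rfl⟩
  · rintro h o ⟨y, hy⟩
    obtain ⟨o', ho', hval⟩ := h y
    rwa [Subtype.ext (hy.trans hval.symm)]

theorem uscFirst_iff_continuous_dualTopEC (TO : TopologicalSpace ↥(OZ sel)) {X : Type u}
    [TopologicalSpace X] (g' : X → ↥(EC Y Z)) :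
    USCFirst sel TO g' ↔ Continuous[‹_›, dualTopEC sel TO] g' := by
  let := dualTopEC sel TO
  constructor
  · intro husc
    refine continuous_generateFrom_iff.mpr ?_
    rintro S ⟨ℍ, U, hℍ, hU, rfl⟩
    refine isOpen_iff_forall_mem_open.mpr fun x hx => ?_
    obtain ⟨V, hV, hxV, hVℍ⟩ :=
      husc U hU x ℍ hℍ ((gbar_subset_iff_mem_ECSet sel g' hU ℍ x).mpr hx)
    exact ⟨V, fun x' hx' => (gbar_subset_iff_mem_ECSet sel g' hU ℍ x').mp (hVℍ x' hx'), hV, hxV⟩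
  · intro hg' U hU x ℍ hℍ hx
    have hopen : IsOpen (ECSet sel ℍ U) :=
      TopologicalSpace.isOpen_generateFrom_of_mem ⟨ℍ, U, hℍ, hU, rfl⟩
    exact ⟨g' ⁻¹' ECSet sel ℍ U, hopen.preimage hg',
      (gbar_subset_iff_mem_ECSet sel g' hU ℍ x).mp hx,
      fun x' hx' => (gbar_subset_iff_mem_ECSet sel g' hU ℍ x').mpr hx'⟩

end Dual

theorem admissibleO_iff_dual_admissible_general {Y Z : Type u} [TopologicalSpace Y]
    [UniformSpace Z] (sel : Set (Z × Z) → ↥(EC Y Z) → Y → Set Y)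
    (TO : TopologicalSpace ↥(OZ sel)) :
    AdmissibleO sel TO ↔ Admissible (dualTopEC sel TO) := by
  simp only [AdmissibleO, uscFirst_iff_continuous_dualTopEC, admissible_iff_forall_continuous]

/-- a topology `𝕋` on `𝒪_Z(Y)` is admissible iff its dual topology
`𝔗(𝕋)` on `EC(Y,Z)` is admissible. -/
theorem admissibleO_iff_dual_admissible {Y Z : Type u} [TopologicalSpace Y]
    [UniformSpace Z] (sel : Set (Z × Z) → ↥(EC Y Z) → Y → Set Y)
    (hsel : IsSelection sel) (TO : TopologicalSpace ↥(OZ sel)) :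
    AdmissibleO sel TO ↔ Admissible (dualTopEC sel TO) :=
  admissibleO_iff_dual_admissible_general sel TO
end
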